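/- Let φ : ℝ^n → ℂ^N be a smooth, not identically zero, solution of the stationary nonlinear Dirac equation ℒ₋φ = 0, and let α₀ be a Hermitian N×N complex matrix with α₀² = I_N that anticommutes with β and with each α_j, 1 ≤ j ≤ n. Then the function α₀φ is not identically zero and satisfies -i ℒ(α₀φ) = 2iω (α₀φ); that is, 2ωi is an eigenvalue of the linearized operator 𝒥ℒ (where 𝒥 is multiplication by -i), with eigenfunction α₀φ. -/

import Mathlib

open MeasureTheory Matrix

/-- Partial derivative of `f` in the `j`-th coordinate direction. -/
noncomputable def pderiv' {n : ℕ} {E : Type*} [NormedAddCommGroup E] [NormedSpace ℝ E]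
    (j : Fin n) (f : (Fin n → ℝ) → E) (x : Fin n → ℝ) : E :=
  fderiv ℝ f x (Pi.single j 1)

/-- `φ*βφ`, the (real) scalar density of the Soler model. -/
noncomputable def solerDensity {n N : ℕ} (β : Matrix (Fin N) (Fin N) ℂ)
    (φ : (Fin n → ℝ) → Fin N → ℂ) (x : Fin n → ℝ) : ℝ :=
  (dotProduct (star (φ x)) (β.mulVec (φ x))).re

/-- The operator `ℒ₋ψ = -i∑_j α_j ∂_jψ - ωψ + g(φ*βφ)βψ`. -/
noncomputable def diracLminus {n N : ℕ}
    (α : Fin n → Matrix (Fin N) (Fin N) ℂ) (β : Matrix (Fin N) (Fin N) ℂ)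
    (g : ℝ → ℝ) (ω : ℝ)
    (φ ψ : (Fin n → ℝ) → Fin N → ℂ) (x : Fin n → ℝ) : Fin N → ℂ :=
  (-Complex.I) • (∑ j : Fin n, (α j).mulVec (pderiv' j ψ x))
    - (ω : ℂ) • ψ x
    + (g (solerDensity β φ x) : ℂ) • β.mulVec (ψ x)

/-- The linearization `ℒψ = ℒ₋ψ + 2g'(φ*βφ) Re(φ*βψ) βφ`. -/
noncomputable def diracL {n N : ℕ}
    (α : Fin n → Matrix (Fin N) (Fin N) ℂ) (β : Matrix (Fin N) (Fin N) ℂ)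
    (g : ℝ → ℝ) (ω : ℝ)
    (φ ψ : (Fin n → ℝ) → Fin N → ℂ) (x : Fin n → ℝ) : Fin N → ℂ :=
  diracLminus α β g ω φ ψ x
    + ((2 * deriv g (solerDensity β φ x)
        * (dotProduct (star (φ x)) (β.mulVec (ψ x))).re : ℝ) : ℂ)
      • β.mulVec (φ x)

lemma pderiv_mulVec {n N : ℕ} (M : Matrix (Fin N) (Fin N) ℂ)
    (φ : (Fin n → ℝ) → Fin N → ℂ) (hφ : Differentiable ℝ φ) (j : Fin n) (x : Fin n → ℝ) :
    pderiv' j (fun y => M.mulVec (φ y)) x = M.mulVec (pderiv' j φ x) := by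
  set L : (Fin N → ℂ) →L[ℝ] (Fin N → ℂ) :=
    LinearMap.toContinuousLinearMap ((M.mulVecLin).restrictScalars ℝ) with hL
  have h1 : HasFDerivAt (fun y => L (φ y)) (L.comp (fderiv ℝ φ x)) x :=
    (L.hasFDerivAt).comp x (hφ x).hasFDerivAt
  have h2 : pderiv' j (fun y => L (φ y)) x = L (pderiv' j φ x) := by
    unfold pderiv'
    rw [h1.fderiv]; rfl
  simpa [hL] using h2

lemma re_anticomm {N : ℕ} (β α₀ : Matrix (Fin N) (Fin N) ℂ)
    (hβherm : β.IsHermitian) (hα₀herm : α₀.IsHermitian)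
    (hα₀β : α₀ * β + β * α₀ = 0) (v : Fin N → ℂ) :
    (dotProduct (star v) (β.mulVec (α₀.mulVec v))).re = 0 := by
  set z := dotProduct (star v) ((β * α₀).mulVec v) with hz
  have h1 : dotProduct (star v) (β.mulVec (α₀.mulVec v)) = z := by
    rw [hz, Matrix.mulVec_mulVec]
  have hM : (β * α₀)ᴴ = -(β * α₀) := by
    rw [Matrix.conjTranspose_mul, hα₀herm.eq, hβherm.eq]
    linear_combination (norm := noncomm_ring) hα₀β
  have hconj : star z = -z := by
    rw [hz]
    calc star (dotProduct (star v) ((β * α₀).mulVec v))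
        = dotProduct (star ((β * α₀).mulVec v)) v := by
          rw [← Matrix.star_dotProduct_star, star_star, dotProduct_comm]
      _ = dotProduct (star v) ((β * α₀)ᴴ.mulVec v) := by
          rw [Matrix.star_mulVec, ← Matrix.dotProduct_mulVec]
      _ = -(dotProduct (star v) ((β * α₀).mulVec v)) := by
          rw [hM]; simp [Matrix.neg_mulVec]
  have : z.re = 0 := by
    have := congrArg Complex.re hconj
    simp [Complex.star_def] at this
    linarith
  rw [h1]; exact this

/-- if `ℒ₋φ = 0`, `φ` not identically zero, and `α₀` is a Hermitian
involution anticommuting with `β` and each `α_j`, then `α₀φ` is not identically zero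
and `-iℒ(α₀φ) = 2iω(α₀φ)`: `2ωi` is an eigenvalue of `𝒥ℒ` with eigenfunction `α₀φ`. -/
theorem stmt_11 (n N : ℕ) (hn : 1 ≤ n) (hN : 1 ≤ N)
    (α : Fin n → Matrix (Fin N) (Fin N) ℂ) (β : Matrix (Fin N) (Fin N) ℂ)
    (hαherm : ∀ j, (α j).IsHermitian) (hβherm : β.IsHermitian)
    (hαα : ∀ j k, α j * α k + α k * α j
      = if j = k then (2 : ℂ) • (1 : Matrix (Fin N) (Fin N) ℂ) else 0)
    (hαβ : ∀ j, α j * β + β * α j = 0)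
    (hβ2 : β * β = 1)
    (g : ℝ → ℝ) (hg : ContDiff ℝ (⊤ : ℕ∞) g) (ω : ℝ)
    (φ : (Fin n → ℝ) → Fin N → ℂ) (hφsmooth : ContDiff ℝ (⊤ : ℕ∞) φ)
    (hφne : ¬(∀ x, φ x = 0))
    (hsol : ∀ x, diracLminus α β g ω φ φ x = 0)
    (α₀ : Matrix (Fin N) (Fin N) ℂ) (hα₀herm : α₀.IsHermitian)
    (hα₀sq : α₀ * α₀ = 1)
    (hα₀β : α₀ * β + β * α₀ = 0)
    (hα₀α : ∀ j, α₀ * α j + α j * α₀ = 0) :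
    (¬(∀ x, α₀.mulVec (φ x) = 0))
    ∧ (∀ x, (-Complex.I) • diracL α β g ω φ (fun y => α₀.mulVec (φ y)) x
        = ((2 * ω : ℝ) * Complex.I) • α₀.mulVec (φ x)) := by
  constructor
  · intro h
    apply hφne
    intro x
    have : φ x = α₀.mulVec (α₀.mulVec (φ x)) := by
      rw [Matrix.mulVec_mulVec, hα₀sq, Matrix.one_mulVec]
    rw [this, h x, Matrix.mulVec_zero]
  · intro x
    have hDφ : Differentiable ℝ φ := hφsmooth.differentiable (by simp)
    have hre := re_anticomm β α₀ hβherm hα₀herm hα₀β (φ x)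
    have hsolx := hsol x
    have hpd : ∀ j : Fin n, pderiv' j (fun y => α₀.mulVec (φ y)) x
        = α₀.mulVec (pderiv' j φ x) := fun j => pderiv_mulVec α₀ φ hDφ j x
    have hswap : ∀ j : Fin n, ∀ u : Fin N → ℂ,
        (α j).mulVec (α₀.mulVec u) = -(α₀.mulVec ((α j).mulVec u)) := by
      intro j u
      have hm : α j * α₀ = -(α₀ * α j) := by
        linear_combination (norm := noncomm_ring) hα₀α j
      rw [Matrix.mulVec_mulVec, hm, Matrix.neg_mulVec, Matrix.mulVec_mulVec]
    have hβswap : β.mulVec (α₀.mulVec (φ x)) = -(α₀.mulVec (β.mulVec (φ x))) := by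
      have hm : β * α₀ = -(α₀ * β) := by
        linear_combination (norm := noncomm_ring) hα₀β
      rw [Matrix.mulVec_mulVec, hm, Matrix.neg_mulVec, Matrix.mulVec_mulVec]
    unfold diracL diracLminus at hsolx ⊢
    set S := ∑ j : Fin n, (α j).mulVec (pderiv' j φ x) with hS
    set p := α₀.mulVec (φ x) with hp
    set gc := (g (solerDensity β φ x) : ℂ) with hgc
    -- the linearization correction vanishes
    rw [hre]
    simp only [mul_zero, Complex.ofReal_zero, zero_smul, add_zero, hpd, hβswap]
    simp only [hswap]
    rw [← hp, hβswap]
    have hsum : (∑ j : Fin n, -(α₀.mulVec ((α j).mulVec (pderiv' j φ x))))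
        = -(α₀.mulVec S) := by
      have hms : α₀.mulVec (∑ j : Fin n, (α j).mulVec (pderiv' j φ x))
          = ∑ j : Fin n, α₀.mulVec ((α j).mulVec (pderiv' j φ x)) := by
        ext i
        simp only [Matrix.mulVec, dotProduct, Finset.sum_apply, Finset.mul_sum]
        exact Finset.sum_comm
      rw [hS, hms, ← Finset.sum_neg_distrib]
    rw [hsum]
    -- apply α₀ to the stationary equation
    have h0 : -(Complex.I • α₀.mulVec S) - (ω:ℂ) • p
        + gc • (α₀ * β).mulVec (φ x) = 0 := by
      have := congrArg (fun v => α₀.mulVec v) hsolx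
      simpa [Matrix.mulVec_add, Matrix.mulVec_sub, Matrix.mulVec_smul,
        Matrix.mulVec_neg, neg_smul, hp] using this
    simp only [Matrix.mulVec_mulVec]
    set u := α₀.mulVec S with hu
    set w := (α₀ * β).mulVec (φ x) with hw
    have hcast : (((2 * ω : ℝ)) : ℂ) = 2 * (ω:ℂ) := by push_cast; ring
    rw [hcast]
    linear_combination (norm := module) Complex.I • h0
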